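/- arXiv:2405.06208 — 9 statements merged into one kernel-verified Lean document; each statement's English description precedes it below -/
import Mathlib

section
/- Let S ⊆ {0,...,2^b - 1}, let y ∈ {0,...,2^b - 1}, and consider the path in the binary trie from the leaf with key y to the root. If for every node on this path, its left child either has bit 0 or is itself on the path, then no key in S is smaller than y, i.e., the predecessor of y in S is -1. -/
/-- Let `S ⊆ {0,...,2^b-1}` and `y ∈ {0,...,2^b-1}`.  The node at depth `j` on the path from
the leaf with key `y` to the root is the prefix `y / 2^(b-j)`; its left child is
`2 * (y / 2^(b-j))` at depth `j+1`, and the bit of a node `z` at depth `j` is 1 iff `z` is the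
length-`j` prefix of some key of `S`.  If for every node on this path its left child either
has bit 0 or is itself on the path, then no key in `S` is smaller than `y` (i.e. the
predecessor of `y` in `S` is `-1`). -/
theorem binary_trie_pred_none (b : ℕ) (S : Finset ℕ) (hS : ∀ k ∈ S, k < 2 ^ b)
    (y : ℕ) (hy : y < 2 ^ b)
    (h : ∀ i < b,
      (¬ ∃ k ∈ S, k / 2 ^ (b - (i + 1)) = 2 * (y / 2 ^ (b - i))) ∨
      y / 2 ^ (b - (i + 1)) = 2 * (y / 2 ^ (b - i))) :
    ∀ k ∈ S, y ≤ k := by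
  intro k hk
  by_contra hlt
  push_neg at hlt
  classical
  have hP : ∃ j, k / 2 ^ (b - j) ≠ y / 2 ^ (b - j) := ⟨b, by simpa using hlt.ne⟩
  have hmspec := Nat.find_spec hP
  have hm0 : Nat.find hP ≠ 0 := by
    intro h0
    rw [h0] at hmspec
    simp [Nat.div_eq_of_lt (hS k hk), Nat.div_eq_of_lt hy] at hmspec
  obtain ⟨i, hieq⟩ := Nat.exists_eq_succ_of_ne_zero hm0
  rw [hieq] at hmspec
  have heq : k / 2 ^ (b - i) = y / 2 ^ (b - i) := by
    have := Nat.find_min hP (hieq ▸ Nat.lt_succ_self i)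
    simpa using this
  have hib : i < b := by
    by_contra hge
    push_neg at hge
    have h1 : b - (i + 1) = b - i := by omega
    rw [h1, heq] at hmspec
    exact hmspec rfl
  have hexp : 2 ^ (b - i) = 2 ^ (b - (i + 1)) * 2 := by
    rw [← pow_succ]
    congr 1
    omega
  set d := 2 ^ (b - (i + 1)) with hd
  have h1 : k / d / 2 = y / 2 ^ (b - i) := by
    rw [Nat.div_div_eq_div_mul, ← hexp, heq]
  have h2 : y / d / 2 = y / 2 ^ (b - i) := by
    rw [Nat.div_div_eq_div_mul, ← hexp]
  have h3 : k / d ≤ y / d := Nat.div_le_div_right hlt.le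
  have hkd : k / d = 2 * (y / 2 ^ (b - i)) := by omega
  have hyd : y / d = 2 * (y / 2 ^ (b - i)) + 1 := by omega
  rcases h i hib with hc | hc
  · exact hc ⟨k, hk, hkd⟩
  · rw [← hd] at hc
    omega
end

section
/- Let S ⊆ {0,...,2^b - 1} be nonempty below y, and let t be the first node on the path from the leaf with key y to the root whose left child has bit 1 and is not on this path. Then starting from that left child and repeatedly descending to the rightmost child with bit 1, one reaches the leaf whose key is the predecessor of y in S (the largest element of S strictly less than y). -/
/-!
Nodes at height `s` above the leaves are the quotients `k / 2 ^ s`. Let `P` be the largest key in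
the subtree of the left child `c`. Since the descent always prefers a right child that has bit 1,
it follows the ancestors of `P` and ends at `P`. Every key below `y` lies left of `y`'s path: it
either falls into the subtree of `c`, or lies left of that subtree (and so below `P`), or branches
off `y`'s path to the left strictly below `c`'s depth, which the choice of `t` as the first such
node excludes.
-/

namespace Nat

lemma div_two_pow_succ (a s : ℕ) : a / 2 ^ (s + 1) = a / 2 ^ s / 2 := by
  rw [Nat.div_div_eq_div_mul, pow_succ]

lemma div_pow_eq_div_pow_of_le {a b n s t : ℕ} (h : a / n ^ s = b / n ^ s) (hst : s ≤ t) :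
    a / n ^ t = b / n ^ t := by
  obtain ⟨r, rfl⟩ := Nat.exists_eq_add_of_le hst
  rw [pow_add, ← Nat.div_div_eq_div_mul, h, Nat.div_div_eq_div_mul]

lemma exists_branch_of_lt {k y : ℕ} (hky : k < y) :
    ∀ {d : ℕ}, k / 2 ^ d = y / 2 ^ d →
      ∃ s < d, k / 2 ^ s = 2 * (y / 2 ^ (s + 1)) ∧ y / 2 ^ s ≠ 2 * (y / 2 ^ (s + 1))
  | 0, h => by simp at h; omega
  | d + 1, h => by
    by_cases hd : k / 2 ^ d = y / 2 ^ d
    · obtain ⟨s, hs, hbranch⟩ := exists_branch_of_lt hky hd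
      exact ⟨s, by omega, hbranch⟩
    · have hle : k / 2 ^ d ≤ y / 2 ^ d := Nat.div_le_div_right hky.le
      rw [div_two_pow_succ k, div_two_pow_succ y] at h
      exact ⟨d, by omega, by rw [div_two_pow_succ y]; omega, by rw [div_two_pow_succ y]; omega⟩

end Nat

section BinaryTrie

open Nat

variable {S : Finset ℕ} {d c P : ℕ}

lemma exists_mem_div_eq_succ_iff (hP : IsGreatest {k | k ∈ S ∧ k / 2 ^ d = c} P) {s : ℕ}
    (hs : s < d) :
    (∃ k ∈ S, k / 2 ^ s = 2 * (P / 2 ^ (s + 1)) + 1) ↔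
      P / 2 ^ s = 2 * (P / 2 ^ (s + 1)) + 1 := by
  refine ⟨fun ⟨k, hkS, hk⟩ => ?_, fun h => ⟨P, hP.1.1, h⟩⟩
  have hparent : k / 2 ^ (s + 1) = P / 2 ^ (s + 1) := by
    rw [div_two_pow_succ k]
    omega
  have hkc : k / 2 ^ d = c := (div_pow_eq_div_pow_of_le hparent hs).trans hP.1.2
  have hle : k / 2 ^ s ≤ P / 2 ^ s := Nat.div_le_div_right (hP.2 ⟨hkS, hkc⟩)
  have hhalf := div_two_pow_succ P s
  omega

lemma descent_eq_div (hP : IsGreatest {k | k ∈ S ∧ k / 2 ^ d = c} P) {z : ℕ → ℕ}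
    (hz0 : z 0 = c)
    (hstep : ∀ m < d,
      ((∃ k ∈ S, k / 2 ^ (d - (m + 1)) = 2 * z m + 1) → z (m + 1) = 2 * z m + 1) ∧
      (¬ (∃ k ∈ S, k / 2 ^ (d - (m + 1)) = 2 * z m + 1) → z (m + 1) = 2 * z m)) :
    ∀ m ≤ d, z m = P / 2 ^ (d - m)
  | 0, _ => by rw [hz0, Nat.sub_zero, hP.1.2]
  | m + 1, hm => by
    have hz : z m = P / 2 ^ (d - (m + 1) + 1) := by
      rw [descent_eq_div hP hz0 hstep m (by omega)]
      congr 2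
      omega
    have hright := exists_mem_div_eq_succ_iff hP (s := d - (m + 1)) (by omega)
    rw [← hz] at hright
    have hhalf := div_two_pow_succ P (d - (m + 1))
    by_cases h : ∃ k ∈ S, k / 2 ^ (d - (m + 1)) = 2 * z m + 1
    · rw [(hstep m (by omega)).1 h, hright.1 h]
    · have hleft := mt hright.2 h
      rw [(hstep m (by omega)).2 h]
      omega

lemma isGreatest_lt_of_div_eq_succ (hP : IsGreatest {k | k ∈ S ∧ k / 2 ^ d = c} P) {y : ℕ}
    (hy : y / 2 ^ d = c + 1)
    (hfirst : ∀ s < d, ¬ ((∃ k ∈ S, k / 2 ^ s = 2 * (y / 2 ^ (s + 1))) ∧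
      y / 2 ^ s ≠ 2 * (y / 2 ^ (s + 1)))) :
    IsGreatest {k | k ∈ S ∧ k < y} P := by
  refine ⟨⟨hP.1.1, Nat.lt_of_div_lt_div (c := 2 ^ d) (by have := hP.1.2; omega)⟩, ?_⟩
  rintro k ⟨hkS, hky⟩
  rcases lt_trichotomy (k / 2 ^ d) c with hlt | heq | hgt
  · exact (Nat.lt_of_div_lt_div (hP.1.2 ▸ hlt)).le
  · exact hP.2 ⟨hkS, heq⟩
  · have hle : k / 2 ^ d ≤ y / 2 ^ d := Nat.div_le_div_right hky.le
    obtain ⟨s, hs, hk, hyr⟩ := exists_branch_of_lt hky (d := d) (by omega)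
    exact absurd ⟨⟨k, hkS, hk⟩, hyr⟩ (hfirst s hs)

end BinaryTrie

theorem binary_trie_pred_descent_general (b : ℕ) (S : Finset ℕ)
    (y : ℕ)
    (i : ℕ) (hib : i < b)
    (c : ℕ) (hc : c = 2 * (y / 2 ^ (b - i)))
    (hbit : ∃ k ∈ S, k / 2 ^ (b - (i + 1)) = c)
    (hnotpath : y / 2 ^ (b - (i + 1)) ≠ c)
    (hfirst : ∀ j, i < j → j < b →
      ¬ ((∃ k ∈ S, k / 2 ^ (b - (j + 1)) = 2 * (y / 2 ^ (b - j))) ∧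
         y / 2 ^ (b - (j + 1)) ≠ 2 * (y / 2 ^ (b - j))))
    (z : ℕ → ℕ) (hz0 : z 0 = c)
    (hzstep : ∀ m, i + 1 + m < b →
      ((∃ k ∈ S, k / 2 ^ (b - (i + 1 + m + 1)) = 2 * z m + 1) → z (m + 1) = 2 * z m + 1) ∧
      (¬ (∃ k ∈ S, k / 2 ^ (b - (i + 1 + m + 1)) = 2 * z m + 1) → z (m + 1) = 2 * z m)) :
    z (b - (i + 1)) ∈ S ∧ z (b - (i + 1)) < y ∧
      ∀ k ∈ S, k < y → k ≤ z (b - (i + 1)) := by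
  set d := b - (i + 1)
  obtain ⟨P, hP⟩ : ∃ P, IsGreatest {k | k ∈ S ∧ k / 2 ^ d = c} P := by
    obtain ⟨k, hk⟩ := hbit
    exact ⟨_, by simpa using (S.filter (· / 2 ^ d = c)).isGreatest_max' ⟨k, by simpa using hk⟩⟩
  have hzP : z d = P := by
    refine (descent_eq_div hP hz0 (fun m hm => ?_) d le_rfl).trans (by simp)
    rw [show d - (m + 1) = b - (i + 1 + m + 1) by omega]
    exact hzstep m (by omega)
  have hy : y / 2 ^ d = c + 1 := by
    have := Nat.div_two_pow_succ y d
    rw [show d + 1 = b - i by omega] at this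
    omega
  have hpred := isGreatest_lt_of_div_eq_succ hP hy fun s hs => by
    have := hfirst (b - (s + 1)) (by omega) (by omega)
    rwa [show b - (b - (s + 1) + 1) = s by omega, show b - (b - (s + 1)) = s + 1 by omega] at this
  rw [hzP]
  exact ⟨hpred.1.1, hpred.1.2, fun k hk hky => hpred.2 ⟨hk, hky⟩⟩

/-- Let `S ⊆ {0,...,2^b-1}` be nonempty below `y`.  Nodes at depth `j` are encoded as natural
numbers (`y`'s ancestor at depth `j` is `y / 2^(b-j)`), and the bit of node `z` at depth `j`
is 1 iff `z` is the length-`j` prefix of some key of `S`.  Let the node at depth `i` be the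
first node on the path from the leaf with key `y` to the root (i.e. the deepest such node)
whose left child `c = 2 * (y / 2^(b-i))` has bit 1 and is not on this path.  If `z`
describes the descent that starts from `c` and repeatedly moves to the rightmost child with
bit 1 (right child if it has bit 1, otherwise left child), then the leaf reached,
`z (b - (i+1))`, is the predecessor of `y` in `S`: it is in `S`, is less than `y`, and every
key of `S` below `y` is at most it. -/
theorem binary_trie_pred_descent (b : ℕ) (S : Finset ℕ) (hS : ∀ k ∈ S, k < 2 ^ b)
    (y : ℕ) (hy : y < 2 ^ b)
    (hne : ∃ k ∈ S, k < y)
    (i : ℕ) (hib : i < b)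
    (c : ℕ) (hc : c = 2 * (y / 2 ^ (b - i)))
    (hbit : ∃ k ∈ S, k / 2 ^ (b - (i + 1)) = c)
    (hnotpath : y / 2 ^ (b - (i + 1)) ≠ c)
    (hfirst : ∀ j, i < j → j < b →
      ¬ ((∃ k ∈ S, k / 2 ^ (b - (j + 1)) = 2 * (y / 2 ^ (b - j))) ∧
         y / 2 ^ (b - (j + 1)) ≠ 2 * (y / 2 ^ (b - j))))
    (z : ℕ → ℕ) (hz0 : z 0 = c)
    (hzstep : ∀ m, i + 1 + m < b →
      ((∃ k ∈ S, k / 2 ^ (b - (i + 1 + m + 1)) = 2 * z m + 1) → z (m + 1) = 2 * z m + 1) ∧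
      (¬ (∃ k ∈ S, k / 2 ^ (b - (i + 1 + m + 1)) = 2 * z m + 1) → z (m + 1) = 2 * z m)) :
    z (b - (i + 1)) ∈ S ∧ z (b - (i + 1)) < y ∧
      ∀ k ∈ S, k < y → k ≤ z (b - (i + 1)) :=
  binary_trie_pred_descent_general b S y i hib c hc hbit hnotpath hfirst z hz0 hzstep
end

section
/- Let pOp be a predecessor query with key y over an abstract relaxed binary trie satisfying the RelaxedPredecessor specification, and suppose that for every key x with k < x < y, the last S-modifying update operation with key x linearized prior to the end of pOp is not concurrent with pOp, where k is the largest key less than y completely present throughout pOp (or -1 if none). Then pOp returns exactly k. -/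
/-- Abstract model of a relaxed binary trie and a `RelaxedPredecessor(y)` operation `pOp`
with execution interval `[ps, pe]`.  `E` is the type of S-modifying update operations with
execution intervals `[inv e, comp e]` and linearization points `lin e`, each having a key
and a type (`isIns e` iff it is an Insert).  An event is *concurrent* with `pOp` iff their
intervals overlap; `IsLast e` says `e` is the last S-modifying update with its key
linearized prior to the end of `pOp`; `CP x` says key `x` is *completely present*
throughout `pOp`; `InSDuring x` says `x ∈ S` at some time during `pOp` (the last event
with key `x` linearized by that time is an Insert).  `k` is the largest key less than `y`
that is completely present throughout `pOp`, or `-1` if no such key exists, and `ret` is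
the return value of `pOp` (`none` standing for `⊥`).  Under the RelaxedPredecessor
specification, if for every key `x` with `k < x < y` the last S-modifying update with
key `x` linearized prior to the end of `pOp` is not concurrent with `pOp`, then `pOp`
returns exactly `k`. -/
theorem relaxed_predecessor_returns_k
    (E : Type) (key : E → ℤ) (isIns : E → Prop)
    (inv lin comp : E → ℝ)
    (hil : ∀ e, inv e ≤ lin e) (hlc : ∀ e, lin e ≤ comp e)
    (hinj : ∀ e e', key e = key e' → lin e = lin e' → e = e')
    (hkeys : ∀ e, 0 ≤ key e)
    (ps pe : ℝ) (hp : ps ≤ pe)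
    (y k : ℤ) (ret : Option ℤ)
    (Conc : E → Prop) (hConc : ∀ e, Conc e ↔ (inv e ≤ pe ∧ ps ≤ comp e))
    (IsLast : E → Prop)
    (hIsLast : ∀ e, IsLast e ↔
      (lin e ≤ pe ∧ ∀ e', key e' = key e → lin e' ≤ pe → lin e' ≤ lin e))
    (hLastExists : ∀ x : ℤ, (∃ e, key e = x ∧ lin e ≤ pe) → ∃ e, key e = x ∧ IsLast e)
    (CP : ℤ → Prop)
    (hCP : ∀ x, CP x ↔ ∃ e, key e = x ∧ isIns e ∧ comp e < ps ∧
        ∀ e', key e' = x → ¬ isIns e' → lin e < lin e' → ¬ lin e' ≤ pe)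
    (InSDuring : ℤ → Prop)
    (hInS : ∀ x, InSDuring x ↔ ∃ t, ps ≤ t ∧ t ≤ pe ∧
        ∃ e, key e = x ∧ isIns e ∧ lin e ≤ t ∧
          ∀ e', key e' = x → lin e' ≤ t → lin e' ≤ lin e)
    -- definition of k : largest key < y completely present throughout pOp, or -1
    (hky : k < y) (hkm1 : -1 ≤ k)
    (hkCP : k = -1 ∨ CP k)
    (hkmax : ∀ x, x < y → CP x → x ≤ k)
    -- the RelaxedPredecessor specification
    (hspec_range : ret = none ∨ ∃ x, ret = some x ∧ k ≤ x ∧ x < y)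
    (hspec_bot : ret = none → ∃ x, k < x ∧ x < y ∧ ∃ e, key e = x ∧ IsLast e ∧ Conc e)
    (hspec_key : ∀ x, ret = some x → k < x → InSDuring x)
    -- hypothesis: no last update with key strictly between k and y is concurrent with pOp
    (hnc : ∀ x, k < x → x < y → ∀ e, key e = x → IsLast e → ¬ Conc e) :
    ret = some k := by
  rcases hspec_range with hnone | ⟨x, hx, hkx, hxy⟩
  · rcases hspec_bot hnone with ⟨x, hkx, hxy, e, hke, hlast, hconc⟩
    exact absurd hconc (hnc x hkx hxy e hke hlast)
  · rcases eq_or_lt_of_le hkx with h | h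
    · rw [hx, h]
    · exfalso
      have hin := hspec_key x hx h
      rw [hInS] at hin
      rcases hin with ⟨t, hpt, htp, e, hke, hins, hlt, hmax⟩
      have hle : lin e ≤ pe := le_trans hlt htp
      rcases hLastExists x ⟨e, hke, hle⟩ with ⟨e', hke', hlast'⟩
      have hnconc := hnc x h hxy e' hke' hlast'
      rw [hConc] at hnconc
      rw [hIsLast] at hlast'
      have hle' : lin e' ≤ pe := hlast'.1
      have hinv : inv e' ≤ pe := le_trans (hil e') hle'
      have hcomp : comp e' < ps := by
        by_contra hc
        exact hnconc ⟨hinv, le_of_not_gt hc⟩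
      have hl't : lin e' ≤ t := le_trans (le_trans (hlc e') (le_of_lt hcomp)) hpt
      have h1 : lin e ≤ lin e' := hlast'.2 e (by rw [hke, hke']) hle
      have h2 : lin e' ≤ lin e := hmax e' hke' hl't
      have hee : e = e' := hinj e e' (by rw [hke, hke']) (le_antisymm h1 h2)
      have hcp : CP x := by
        rw [hCP]
        refine ⟨e, hke, hins, by rw [hee]; exact hcomp, ?_⟩
        intro e'' hk'' _ hlin hle''
        have := hlast'.2 e'' (by rw [hk'', hke']) hle''
        rw [← hee] at this
        exact absurd hlin (not_lt.2 this)
      exact absurd (hkmax x hxy hcp) (not_le.2 h)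
end

section
/- Suppose the latest-list for key x is a sequence of at most 2 update nodes maintained under the invariants: (1) a new node is only prepended when the current head node's latestNext field is ⊥; (2) each node's latestNext is initialized to point to the previous head and changes only to ⊥; (3) the head is only replaced after being activated. Then in every reachable state, either the head's latestNext is ⊥, or the head's latestNext points to a node whose latestNext is ⊥; i.e., the latest-list has length at most 2. -/
/-- State machine model of the `latest[x]` list.  A state is a list of nodes, each carrying
`(hasNext, active)`, where `hasNext = true` means the node's `latestNext` field points to
the next node of the list and `hasNext = false` means it is `⊥`.  Transitions: a new
inactive node may be prepended only when the head's `latestNext` is `⊥`; any node's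
`latestNext` may be cleared to `⊥`; any node may be activated. -/
inductive LatestStep : List (Bool × Bool) → List (Bool × Bool) → Prop
  | prepend (h : Bool × Bool) (t : List (Bool × Bool)) (hh : h.1 = false) :
      LatestStep (h :: t) ((true, false) :: h :: t)
  | clear (s : List (Bool × Bool)) (i : ℕ) (hi : i < s.length) :
      LatestStep s (s.set i (false, (s.get ⟨i, hi⟩).2))
  | activate (s : List (Bool × Bool)) (i : ℕ) (hi : i < s.length) :
      LatestStep s (s.set i ((s.get ⟨i, hi⟩).1, true))

/-- Starting from a single node whose `latestNext` is `⊥`, in every reachable state either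
the head's `latestNext` is `⊥`, or the head's `latestNext` points to a node whose
`latestNext` is `⊥`; i.e. the latest-list has length at most 2. -/
theorem latest_list_length_le_two (a : Bool) (s : List (Bool × Bool))
    (hs : Relation.ReflTransGen LatestStep [(false, a)] s) :
    ∃ h t, s = h :: t ∧
      (h.1 = false ∨ ∃ h2 t2, t = h2 :: t2 ∧ h2.1 = false) := by
  induction hs with
  | refl => exact ⟨(false, a), [], rfl, Or.inl rfl⟩
  | tail _ step ih =>
    obtain ⟨h, t, rfl, hP⟩ := ih
    cases step with
    | prepend _ _ hh =>
      exact ⟨(true, false), h :: t, rfl, Or.inr ⟨h, t, rfl, hh⟩⟩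
    | clear s i hi =>
      cases i with
      | zero => exact ⟨(false, _), t, rfl, Or.inl rfl⟩
      | succ j =>
        rcases hP with hf | ⟨h2, t2, rfl, h2f⟩
        · exact ⟨h, _, rfl, Or.inl hf⟩
        · cases j with
          | zero => exact ⟨h, _, rfl, Or.inr ⟨(false, _), t2, rfl, rfl⟩⟩
          | succ k => exact ⟨h, _, rfl, Or.inr ⟨h2, _, rfl, h2f⟩⟩
    | activate s i hi =>
      cases i with
      | zero => exact ⟨(h.1, true), t, rfl, hP.imp id (fun ⟨h2,t2,ht,h2f⟩ => ⟨h2,t2,ht,h2f⟩)⟩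
      | succ j =>
        rcases hP with hf | ⟨h2, t2, rfl, h2f⟩
        · exact ⟨h, _, rfl, Or.inl hf⟩
        · cases j with
          | zero => exact ⟨h, _, rfl, Or.inr ⟨(h2.1, true), t2, rfl, h2f⟩⟩
          | succ k => exact ⟨h, _, rfl, Or.inr ⟨h2, _, rfl, h2f⟩⟩
end

section
/- In the state-machine model of the latest-list, if a node's status changes from Inactive to Active, then at that moment the node is the head of the list and is the first activated node in the list; consequently only the first node of the list can ever be inactive. -/
/-- State machine model of the `latest[x]` list in which activation is restricted to the
head.  A state is a list of nodes, each carrying `(hasNext, active)`.  Transitions: a new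
inactive node may be prepended only when the head's `latestNext` is `⊥` and the outgoing
head is already active; any node's `latestNext` may be cleared to `⊥`; the head may be
activated. -/
inductive LatestStep' : List (Bool × Bool) → List (Bool × Bool) → Prop
  | prepend (h : Bool × Bool) (t : List (Bool × Bool)) (hh : h.1 = false) (ha : h.2 = true) :
      LatestStep' (h :: t) ((true, false) :: h :: t)
  | clear (s : List (Bool × Bool)) (i : ℕ) (hi : i < s.length) :
      LatestStep' s (s.set i (false, (s.get ⟨i, hi⟩).2))
  | activateHead (h : Bool × Bool) (t : List (Bool × Bool)) :
      LatestStep' (h :: t) ((h.1, true) :: t)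

lemma latest_step_inv {a b : List (Bool × Bool)} (h : LatestStep' a b)
    (ha : ∀ (i : ℕ) (hi : i < a.length), 0 < i → (a.get ⟨i, hi⟩).2 = true) :
    ∀ (i : ℕ) (hi : i < b.length), 0 < i → (b.get ⟨i, hi⟩).2 = true := by
  cases h with
  | prepend h t hh hact =>
      intro i hi h0
      match i, hi with
      | 1, hi => simpa using hact
      | (n+2), hi =>
          have := ha (n+1) (by simpa using Nat.lt_of_succ_lt_succ hi) (Nat.succ_pos n)
          simpa using this
  | clear _ j hj =>
      intro i hi h0
      have hi' : i < a.length := by simpa using hi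
      have := ha i hi' h0
      by_cases hij : j = i
      · subst hij
        rw [List.get_eq_getElem, List.getElem_set_self (h := hi)]
        simpa using this
      · rw [List.get_eq_getElem, List.getElem_set_ne hij]
        simpa using this
  | activateHead h t =>
      intro i hi h0
      match i, hi with
      | (n+1), hi =>
          have := ha (n+1) (by simpa using hi) (Nat.succ_pos n)
          simpa using this

lemma latest_inv (s : List (Bool × Bool))
    (hs : Relation.ReflTransGen LatestStep' [(false, true)] s) :
    ∀ (i : ℕ) (hi : i < s.length), 0 < i → (s.get ⟨i, hi⟩).2 = true := by
  induction hs with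
  | refl =>
      intro i hi h0
      simp at hi; omega
  | tail _ step ih => exact latest_step_inv step ih

/-- In every state reachable from a single active node: (1) if a step changes some node's
status from Inactive to Active then that node is the head of the list (and hence, being
active at the head, is the first activated node of the list); (2) consequently every node
other than the first is active, i.e. only the first node of the list can ever be
inactive. -/
theorem latest_list_activation_at_head (s : List (Bool × Bool))
    (hs : Relation.ReflTransGen LatestStep' [(false, true)] s) :
    (∀ (s' : List (Bool × Bool)) (i : ℕ) (hi : i < s.length),
        LatestStep' s s' → (s.get ⟨i, hi⟩).2 = false →
        s' = s.set i ((s.get ⟨i, hi⟩).1, true) → i = 0) ∧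
    (∀ (i : ℕ) (hi : i < s.length), 0 < i → (s.get ⟨i, hi⟩).2 = true) := by
  have inv := latest_inv s hs
  refine ⟨?_, inv⟩
  intro s2 i hi _ hfalse _
  by_contra h0
  have := inv i hi (Nat.pos_of_ne_zero h0)
  rw [this] at hfalse
  exact absurd hfalse (by simp)
end

section
/- For any execution α (a finite set of operations each with an execution interval), the sum over operations op ∈ α of the interval contention c̄(op) is at most twice the sum over op ∈ α of the point contention ċ(op). -/
open Finset

/-- For any execution `α` (a finite collection of operations, each with a nonempty real
execution interval `[lo o, hi o]`), letting the interval contention `c̄(o)` be the number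
of operations whose interval intersects that of `o`, and the point contention `ċ(o)` be
the maximum over points `t` of `o`'s interval of the number of operations whose interval
contains `t`, the sum of the interval contentions is at most twice the sum of the point
contentions. -/
theorem interval_contention_le_twice_point_contention
    (ops : Type*) [Fintype ops] (lo hi : ops → ℝ) (hint : ∀ o, lo o ≤ hi o)
    (barc dotc : ops → ℕ)
    (hbar : ∀ o, barc o = {o' : ops | lo o' ≤ hi o ∧ lo o ≤ hi o'}.ncard)
    (hdot : ∀ o, dotc o = sSup {n : ℕ | ∃ t, lo o ≤ t ∧ t ≤ hi o ∧
        n = {o' : ops | lo o' ≤ t ∧ t ≤ hi o'}.ncard}) :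
    ∑ o, barc o ≤ 2 * ∑ o, dotc o := by
  classical
  set Tf : ops → Finset ops := fun o => univ.filter (fun o' => lo o' ≤ hi o ∧ lo o ≤ hi o')
    with hTf
  set Sf : ops → Finset ops := fun o => univ.filter (fun o' => lo o' ≤ lo o ∧ lo o ≤ hi o')
    with hSf
  have hbar' : ∀ o, barc o = (Tf o).card := by
    intro o
    rw [hbar o, Set.ncard_eq_toFinset_card']
    simp [hTf, Finset.filter_congr_decidable]
  have hdot' : ∀ o, (Sf o).card ≤ dotc o := by
    intro o
    rw [hdot o]
    apply le_csSup
    · refine ⟨Fintype.card ops, ?_⟩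
      rintro n ⟨t, _, _, rfl⟩
      calc {o' : ops | lo o' ≤ t ∧ t ≤ hi o'}.ncard
          ≤ (Set.univ : Set ops).ncard :=
            Set.ncard_le_ncard (Set.subset_univ _) Set.finite_univ
        _ = Fintype.card ops := by rw [Set.ncard_univ, Nat.card_eq_fintype_card]
    · refine ⟨lo o, le_refl _, hint o, ?_⟩
      rw [Set.ncard_eq_toFinset_card']
      simp [hSf]
  have key : ∑ o, (Tf o).card ≤ 2 * ∑ o, (Sf o).card := by
    rw [← Finset.card_sigma, ← Finset.card_sigma]
    set f : (Σ _ : ops, ops) → (Σ _ : ops, ops) :=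
      fun p => if lo p.2 ≤ lo p.1 then p else ⟨p.2, p.1⟩ with hf
    apply Finset.card_le_mul_card_image_of_maps_to (f := f)
    · rintro ⟨a, b⟩ hab
      simp only [Finset.mem_sigma, hTf, Finset.mem_filter, Finset.mem_univ, true_and] at hab
      by_cases h : lo b ≤ lo a
      · simp only [hf, if_pos h, Finset.mem_sigma, hSf, Finset.mem_filter, Finset.mem_univ,
          true_and, Finset.mem_univ]
        exact ⟨h, hab.2⟩
      · simp only [hf, if_neg h, Finset.mem_sigma, hSf, Finset.mem_filter, Finset.mem_univ,
          true_and]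
        exact ⟨le_of_lt (lt_of_not_ge h), hab.1⟩
    · intro b _
      have hsub : ((univ.sigma Tf).filter (fun a => f a = b)) ⊆ {b, ⟨b.2, b.1⟩} := by
        intro a ha
        simp only [Finset.mem_filter] at ha
        rcases ha with ⟨_, hfa⟩
        by_cases h : lo a.2 ≤ lo a.1
        · simp only [hf, if_pos h] at hfa
          simp [hfa]
        · simp only [hf, if_neg h] at hfa
          have : a = ⟨b.2, b.1⟩ := by
            rcases a with ⟨a1, a2⟩
            cases hfa
            rfl
          simp [this]
      calc ((univ.sigma Tf).filter (fun a => f a = b)).card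
          ≤ ({b, ⟨b.2, b.1⟩} : Finset (Σ _ : ops, ops)).card := Finset.card_le_card hsub
        _ ≤ 2 := Finset.card_insert_le _ _ |>.trans (by simp)
  calc ∑ o, barc o = ∑ o, (Tf o).card := by simp [hbar']
    _ ≤ 2 * ∑ o, (Sf o).card := key
    _ ≤ 2 * ∑ o, dotc o := by
        apply Nat.mul_le_mul_left
        exact Finset.sum_le_sum (fun o _ => hdot' o)
end

section
/- Let L be a finite sequence of labeled nodes, each with a key and a type in {INS, DEL}, and let L' be obtained by deleting every DEL node that is not the last node in L with its key. Then in L', for every key x, there is at most one DEL node with key x, and if present it occurs after every INS node with key x in L'. -/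
/-!
A DEL node survives only if no later node of `L` shares its key; since `L'` is a sublist of `L`,
no later node of `L'` shares its key either. Both claims then follow by comparing positions.
-/

/-- Given a list of nodes, each a pair `(key, isDel)` (second component `true` means a DEL
node, `false` an INS node), delete every DEL node such that some node with the same key
occurs later in the list, preserving the order of the remaining nodes. -/
def removeStaleDel : List (ℤ × Bool) → List (ℤ × Bool)
  | [] => []
  | a :: t =>
      if a.2 = true ∧ a.1 ∈ t.map Prod.fst then removeStaleDel t
      else a :: removeStaleDel t

lemma removeStaleDel_sublist (L : List (ℤ × Bool)) : (removeStaleDel L).Sublist L := by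
  induction L with
  | nil => exact List.Sublist.slnil
  | cons a t ih =>
    rw [removeStaleDel]
    split
    · exact ih.trans (List.sublist_cons_self a t)
    · exact ih.cons_cons a

lemma removeStaleDel_pairwise (L : List (ℤ × Bool)) :
    (removeStaleDel L).Pairwise (fun a b => a.2 = true → a.1 ≠ b.1) := by
  induction L with
  | nil => exact List.Pairwise.nil
  | cons a t ih =>
    rw [removeStaleDel]
    split
    · exact ih
    · rename_i hkept
      refine List.pairwise_cons.2 ⟨fun b hb hdel hkey => hkept ⟨hdel, ?_⟩, ih⟩
      exact hkey ▸ List.mem_map_of_mem ((removeStaleDel_sublist t).subset hb)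

/-- Let `L'` be obtained from `L` by deleting every DEL node that is not the last node in
`L` with its key.  Then in `L'`, for every key there is at most one DEL node with that key,
and if present it occurs after every INS node with that key in `L'`. -/
theorem removeStaleDel_spec (L : List (ℤ × Bool)) :
    (∀ i j : Fin (removeStaleDel L).length,
        ((removeStaleDel L).get i).2 = true → ((removeStaleDel L).get j).2 = true →
        ((removeStaleDel L).get i).1 = ((removeStaleDel L).get j).1 → i = j) ∧
    (∀ i j : Fin (removeStaleDel L).length,
        ((removeStaleDel L).get i).2 = true → ((removeStaleDel L).get j).2 = false →
        ((removeStaleDel L).get i).1 = ((removeStaleDel L).get j).1 → j < i) := by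
  have no_later_same_key := List.pairwise_iff_get.1 (removeStaleDel_pairwise L)
  refine ⟨fun i j hi hj hkey => ?_, fun i j hi hj hkey => ?_⟩
  · exact le_antisymm (not_lt.1 fun h => no_later_same_key j i h hj hkey.symm)
      (not_lt.1 fun h => no_later_same_key i j h hi hkey)
  · refine lt_of_le_of_ne (not_lt.1 fun h => no_later_same_key i j h hi hkey) ?_
    rintro rfl
    exact Bool.false_ne_true (hj.symm.trans hi)
end

section
/- Suppose w is an integer such that w is a sink of T_L whenever it is a vertex (no DEL record in L has key w), the values reachable from each element of X along T_L-paths are sinks, X contains some x ≥ w, and along the path from x every edge (u, v) with u > w satisfies w ≤ v. Then the set R of sinks of T_L reachable from X contains a key x' with w ≤ x' ≤ x. -/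
/-- Let `T_L = (V, E)` be a finite directed graph on integers where each vertex has at most
one outgoing edge and each edge `(u,v)` satisfies `v < u`, and let `X ⊆ V`.  Suppose `w`
is a sink whenever it is a vertex (it has no outgoing edge), the path from each element
of `X` reaches a sink, `X` contains some `x ≥ w`, and along the path from `x` every edge
`(u, v)` with `u > w` satisfies `w ≤ v`.  Then the set `R` of sinks of `T_L` reachable
from `X` contains a key `x'` with `w ≤ x' ≤ x`. -/
theorem sinks_reachable_from_X_contain_key
    (V : Finset ℤ) (E : ℤ → ℤ → Prop)
    (hEV : ∀ u v, E u v → u ∈ V ∧ v ∈ V)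
    (hfun : ∀ u v v', E u v → E u v' → v = v')
    (hdec : ∀ u v, E u v → v < u)
    (X : Set ℤ) (hXV : X ⊆ ↑V)
    (w x : ℤ)
    (hwsink : ∀ v, ¬ E w v)
    (hreach : ∀ x' ∈ X, ∃ s, Relation.ReflTransGen E x' s ∧ ∀ v, ¬ E s v)
    (hxX : x ∈ X) (hwx : w ≤ x)
    (hpath : ∀ u v, Relation.ReflTransGen E x u → E u v → w < u → w ≤ v)
    (R : Set ℤ)
    (hR : R = {s | (∃ x' ∈ X, Relation.ReflTransGen E x' s) ∧ ∀ v, ¬ E s v}) :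
    ∃ x' ∈ R, w ≤ x' ∧ x' ≤ x := by
  obtain ⟨s, hs, hssink⟩ := hreach x hxX
  refine ⟨s, by rw [hR]; exact ⟨⟨x, hxX, hs⟩, hssink⟩, ?_, ?_⟩
  · -- w ≤ s by induction along the path
    have key : ∀ u, Relation.ReflTransGen E x u → w ≤ u := by
      intro u hu
      induction hu with
      | refl => exact hwx
      | @tail b c hbu hcv ih =>
        rcases lt_or_eq_of_le ih with h | h
        · exact hpath b c hbu hcv h
        · exact absurd hcv (h ▸ hwsink c)
    exact key s hs
  · -- s ≤ x since edges decrease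
    clear hssink
    induction hs with
    | refl => exact le_refl x
    | tail _ hcv ih => exact le_of_lt (lt_of_lt_of_le (hdec _ _ hcv) ih)
end

section
/- Model the notify-list of a predecessor node as a stack to which update operations push notify nodes via compare-and-swap on the head, where an operation verifies a predicate P (being the first activated node for its key) immediately before its successful CAS and where P for two operations on the same key cannot hold simultaneously once the later one's predicate first holds. Then for any two update operations u1, u2 with the same key, if u1 is linearized (its predicate first holds) before u2, every notify node of u2 appears closer to the head than (i.e., was pushed after) every notify node of u1. -/
/-- Model of the notify-list of a predecessor node as a stack pushed onto via CAS.  Events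
occur in a total (real-time) order; each push event `e` by operation `op e` occurs at time
`time e` and has a witness time `wit e < time e` at which the predicate `P (op e)` (being
the first activated update node for its key) held; by the CAS semantics, no other push
succeeds strictly between `wit e` and `time e`, and distinct pushes occur at distinct
times.  Let `u1, u2` be update operations with the same key such that `lin u1 < lin u2`,
`P u1` never holds at any time `≥ lin u2`, and pushes by `u2` occur only after `lin u2`.
Then every notify node of `u2` is pushed after every notify node of `u1` (so it appears
closer to the head of the list). -/
theorem notify_push_order
    (Op Push : Type*) (key : Op → ℤ) (lin : Op → ℝ)
    (P : Op → ℝ → Prop)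
    (op : Push → Op) (time wit : Push → ℝ)
    (hw : ∀ e, wit e < time e)
    (hP : ∀ e, P (op e) (wit e))
    (htimes : ∀ e e', time e = time e' → e = e')
    (hcas : ∀ e e', e' ≠ e → ¬ (wit e < time e' ∧ time e' < time e))
    (u1 u2 : Op) (hkey : key u1 = key u2) (hlin : lin u1 < lin u2)
    (hnever : ∀ t, lin u2 ≤ t → ¬ P u1 t)
    (hpush2 : ∀ e, op e = u2 → lin u2 < time e) :
    ∀ e1 e2, op e1 = u1 → op e2 = u2 → time e1 < time e2 := by
  intro e1 e2 h1 h2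
  have hne : e2 ≠ e1 := by
    intro h; rw [h, h1] at h2
    exact absurd (h2 ▸ hlin) (lt_irrefl _)
  have hw1 : wit e1 < lin u2 := by
    by_contra h
    exact hnever (wit e1) (le_of_not_gt h) (h1 ▸ hP e1)
  have h2t : lin u2 < time e2 := hpush2 e2 h2
  by_contra h
  have : time e2 < time e1 := lt_of_le_of_ne (le_of_not_gt h)
    (fun heq => hne (htimes e2 e1 heq))
  exact hcas e1 e2 hne ⟨hw1.trans h2t, this⟩
end
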